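/- arXiv:2212.08350 — 3 statements merged into one kernel-verified Lean document; each statement's English description precedes it below -/
import Mathlib

section
/- Let M, Q, J, R be real n×n matrices and G a real n×m matrix, where M is symmetric positive definite, Q is symmetric, M and Q commute (so QM is symmetric), J is skew-symmetric, and R is symmetric. Let U : ℝ → ℝᵐ be continuous and let X : ℝ → ℝⁿ be differentiable with M X'(t) = (J - R) Q X(t) + G U(t) for all t. Then the discrete Hamiltonian Ĥ(t) = ½ X(t)ᵀ Q M X(t) satisfies dĤ/dt = -(Q X(t))ᵀ R (Q X(t)) + Y(t)ᵀ U(t), where Y(t) = Gᵀ Q X(t) is the power-conjugated output. -/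
/-!
Since `QM` is symmetric, `dĤ/dt = Ẋᵀ Q M X = (M Ẋ)ᵀ (Q X)`. Substituting the dynamics for `M Ẋ`,
the skew-symmetric `J` contributes `(QX)ᵀ J (QX) = 0`, leaving the dissipation `-(QX)ᵀ R (QX)` and
the supplied power `(Gᵀ Q X)ᵀ U`.
-/

open Matrix

section Derivatives

variable {𝕜 : Type*} [NontriviallyNormedField 𝕜] {ι : Type*} [Fintype ι]
  {f g : 𝕜 → ι → 𝕜} {f' g' : ι → 𝕜} {x : 𝕜}

theorem HasDerivAt.dotProduct (hf : HasDerivAt f f' x) (hg : HasDerivAt g g' x) :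
    HasDerivAt (fun s => f s ⬝ᵥ g s) (f' ⬝ᵥ g x + f x ⬝ᵥ g') x := by
  have hfg : ∀ i ∈ Finset.univ, HasDerivAt (fun s => f s i * g s i)
      (f' i * g x i + f x i * g' i) x :=
    fun i _ => (hasDerivAt_pi.mp hf i).mul (hasDerivAt_pi.mp hg i)
  exact (HasDerivAt.fun_sum hfg).congr_deriv Finset.sum_add_distrib

theorem HasDerivAt.const_mulVec {m : Type*} (A : Matrix m ι 𝕜) (hf : HasDerivAt f f' x) :
    HasDerivAt (fun s => A *ᵥ f s) (A *ᵥ f') x :=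
  hasDerivAt_pi.mpr fun i => by
    simpa only [mulVec, zero_dotProduct, zero_add] using (hasDerivAt_const x (A i)).dotProduct hf

theorem HasDerivAt.dotProduct_mulVec_self {A : Matrix ι ι 𝕜} (hA : A.IsSymm)
    (hf : HasDerivAt f f' x) :
    HasDerivAt (fun s => f s ⬝ᵥ A *ᵥ f s) (2 * (f' ⬝ᵥ A *ᵥ f x)) x := by
  convert hf.dotProduct (hf.const_mulVec A) using 1
  rw [two_mul, ← dotProduct_transpose_mulVec, hA.eq]

end Derivatives

namespace Matrix

variable {α : Type*} {ι κ : Type*} [Fintype ι] [Fintype κ]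

theorem IsSymm.mul_of_mul_eq [CommSemiring α] {A B : Matrix ι ι α} (hA : A.IsSymm)
    (hB : B.IsSymm) (hBA : B * A = A * B) : (A * B).IsSymm := by
  rw [IsSymm, transpose_mul, hA.eq, hB.eq, hBA]

theorem dotProduct_mulVec_self_eq_zero_of_transpose_eq_neg [CommRing α] [IsAddTorsionFree α]
    {J : Matrix ι ι α} (hJ : Jᵀ = -J) (v : ι → α) : v ⬝ᵥ J *ᵥ v = 0 := by
  have h := dotProduct_transpose_mulVec J v v
  rw [hJ, neg_mulVec, dotProduct_neg] at h
  exact self_eq_neg.mp h.symm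

theorem power_balance_of_mulVec_eq [CommRing α] [IsAddTorsionFree α]
    {M Q J R : Matrix ι ι α} {G : Matrix ι κ α} (hM : M.IsSymm) (hMQ : M * Q = Q * M)
    (hJ : Jᵀ = -J) {x x' : ι → α} {u : κ → α}
    (hx' : M *ᵥ x' = (J - R) *ᵥ (Q *ᵥ x) + G *ᵥ u) :
    x' ⬝ᵥ (Q * M) *ᵥ x = -(Q *ᵥ x ⬝ᵥ R *ᵥ (Q *ᵥ x)) + Gᵀ *ᵥ (Q *ᵥ x) ⬝ᵥ u := by
  set q := Q *ᵥ x
  calc x' ⬝ᵥ (Q * M) *ᵥ x = q ⬝ᵥ M *ᵥ x' := by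
        rw [← hMQ, ← mulVec_mulVec, ← dotProduct_transpose_mulVec, hM.eq]
    _ = q ⬝ᵥ J *ᵥ q - q ⬝ᵥ R *ᵥ q + q ⬝ᵥ G *ᵥ u := by
        rw [hx', dotProduct_add, sub_mulVec, dotProduct_sub]
    _ = -(q ⬝ᵥ R *ᵥ q) + Gᵀ *ᵥ q ⬝ᵥ u := by
        rw [dotProduct_mulVec_self_eq_zero_of_transpose_eq_neg hJ,
          ← dotProduct_transpose_mulVec G u q, dotProduct_comm u, zero_sub]

end Matrix

theorem discrete_pH_power_balance_general
    {n m : ℕ} (M Q J R : Matrix (Fin n) (Fin n) ℝ) (G : Matrix (Fin n) (Fin m) ℝ)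
    (hM : M.PosDef) (hQ : Q.IsSymm) (hMQ : M * Q = Q * M)
    (hJ : Jᵀ = -J)
    (U : ℝ → Fin m → ℝ)
    (X : ℝ → Fin n → ℝ) (hX : Differentiable ℝ X)
    (hode : ∀ t, M.mulVec (deriv X t)
      = (J - R).mulVec (Q.mulVec (X t)) + G.mulVec (U t)) :
    ∀ t, HasDerivAt (fun s => (1/2) * (X s ⬝ᵥ (Q * M).mulVec (X s)))
      (-(Q.mulVec (X t) ⬝ᵥ R.mulVec (Q.mulVec (X t)))
        + (Gᵀ.mulVec (Q.mulVec (X t)) ⬝ᵥ U t)) t := by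
  intro t
  have hMs : M.IsSymm := isHermitian_iff_isSymm.mp hM.isHermitian
  have hH := ((hX t).hasDerivAt.dotProduct_mulVec_self (hQ.mul_of_mul_eq hMs hMQ)).const_mul
    (1 / 2 : ℝ)
  rw [power_balance_of_mulVec_eq hMs hMQ hJ (hode t)] at hH
  exact hH.congr_deriv (by ring)

/-- **Discrete power balance of the DG port-Hamiltonian state space model.**
With `M = Mᵀ > 0`, `Q = Qᵀ` commuting with `M`, `J = -Jᵀ`, `R = Rᵀ`, input matrix
`G`, continuous input `U` and differentiable state `X` satisfying
`M X' = (J - R) Q X + G U`, the discrete Hamiltonian `Ĥ = ½ Xᵀ Q M X` satisfies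
`dĤ/dt = -(QX)ᵀ R (QX) + Yᵀ U` with output `Y = Gᵀ Q X`. -/
theorem discrete_pH_power_balance
    {n m : ℕ} (M Q J R : Matrix (Fin n) (Fin n) ℝ) (G : Matrix (Fin n) (Fin m) ℝ)
    (hM : M.PosDef) (hQ : Q.IsSymm) (hMQ : M * Q = Q * M)
    (hJ : Jᵀ = -J) (hR : R.IsSymm)
    (U : ℝ → Fin m → ℝ) (hU : Continuous U)
    (X : ℝ → Fin n → ℝ) (hX : Differentiable ℝ X)
    (hode : ∀ t, M.mulVec (deriv X t)
      = (J - R).mulVec (Q.mulVec (X t)) + G.mulVec (U t)) :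
    ∀ t, HasDerivAt (fun s => (1/2) * (X s ⬝ᵥ (Q * M).mulVec (X s)))
      (-(Q.mulVec (X t) ⬝ᵥ R.mulVec (Q.mulVec (X t)))
        + (Gᵀ.mulVec (Q.mulVec (X t)) ⬝ᵥ U t)) t :=
  discrete_pH_power_balance_general M Q J R G hM hQ hMQ hJ U X hX hode
end

section
/- For all real numbers a₁, a₂, b₁, b₂ (the values of the efforts e₁, e₂ of the left and right element at a common interface node), all β ∈ ℝ and τ, ξ ∈ ℝ, define the numerical fluxes e₁* = (1-β)a₁ + βb₁ + τ(a₂ - b₂) and e₂* = βa₂ + (1-β)b₂ + ξ(a₁ - b₁). Then the net power absorbed at the interface, S = (b₁ - a₁)e₂* + (b₂ - a₂)e₁* + a₁a₂ - b₁b₂, satisfies the identity S = -τ(a₂ - b₂)² - ξ(a₁ - b₁)². In particular, if τ ≥ 0 and ξ ≥ 0 then S ≤ 0 (numerical damping), and if τ = ξ = 0 (conservative flux) then S = 0, i.e., the interconnection of the elements by the numerical flux is power preserving. -/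
/-- **Power balance of the numerical-flux interconnection at an interface node.**
With left/right effort values `a₁, a₂` and `b₁, b₂` and the numerical fluxes
`e₁* = (1-β)a₁ + βb₁ + τ(a₂-b₂)`, `e₂* = βa₂ + (1-β)b₂ + ξ(a₁-b₁)`, the net power
absorbed at the interface `S = (b₁-a₁)e₂* + (b₂-a₂)e₁* + a₁a₂ - b₁b₂` satisfies
`S = -τ(a₂-b₂)² - ξ(a₁-b₁)²`; in particular `S ≤ 0` for `τ, ξ ≥ 0` (numerical
damping) and `S = 0` for `τ = ξ = 0` (power-preserving conservative flux). -/
theorem numerical_flux_interface_power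
    (a₁ a₂ b₁ b₂ β τ ξ : ℝ)
    (e₁star e₂star S : ℝ)
    (he₁ : e₁star = (1 - β) * a₁ + β * b₁ + τ * (a₂ - b₂))
    (he₂ : e₂star = β * a₂ + (1 - β) * b₂ + ξ * (a₁ - b₁))
    (hS : S = (b₁ - a₁) * e₂star + (b₂ - a₂) * e₁star + a₁ * a₂ - b₁ * b₂) :
    S = -τ * (a₂ - b₂)^2 - ξ * (a₁ - b₁)^2
      ∧ (0 ≤ τ → 0 ≤ ξ → S ≤ 0)
      ∧ (τ = 0 → ξ = 0 → S = 0) := by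
  subst he₁ he₂ hS
  refine ⟨by ring, fun hτ hξ => ?_, fun h1 h2 => by subst h1 h2; ring⟩
  nlinarith [sq_nonneg (a₂-b₂), sq_nonneg (a₁-b₁), mul_nonneg hτ (sq_nonneg (a₂-b₂)), mul_nonneg hξ (sq_nonneg (a₁-b₁))]
end

section
/- Let M, Q, J, R be real n×n matrices and G a real n×m matrix, where M and Q are symmetric positive definite, M and Q commute, J is skew-symmetric, and R is symmetric positive semidefinite. Then (i) the matrix M⁻¹Q is symmetric positive definite, and the function H̃(X̃) = ½ X̃ᵀ M⁻¹ Q X̃ has gradient ∇H̃(X̃) = M⁻¹ Q X̃; (ii) if X : ℝ → ℝⁿ is differentiable with M X'(t) = (J - R) Q X(t) + G U(t), then the transformed state X̃(t) = M X(t) satisfies the classical explicit port-Hamiltonian state space equations X̃'(t) = (J - R) ∇H̃(X̃(t)) + G U(t) with output Y(t) = Gᵀ ∇H̃(X̃(t)) = Gᵀ Q X(t), and H̃(X̃(t)) = ½ X(t)ᵀ Q M X(t) equals the original discrete Hamiltonian. -/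
/-!
Since `M` and `Q` commute, so do `M⁻¹` and `Q`, hence `M⁻¹Q` is symmetric; an eigenvector
`v` of `M⁻¹Q` with eigenvalue `λ` solves `Qv = λMv`, so `λ = vᵀQv / vᵀMv > 0`. The same
commutation gives `M⁻¹Q(MX) = QX`: the gradient of `H̃` at `X̃ = MX` is the co-energy `QX`,
and substituting it into `MẊ = (J - R)QX + GU` gives the claimed port-Hamiltonian system,
output and Hamiltonian.
-/

open Matrix

/-- The continuous linear functional `v ↦ w ⬝ᵥ v` on `ℝⁿ`; a gradient `w` viewed
as a Fréchet derivative. -/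
noncomputable def dotCLM {n : ℕ} (w : Fin n → ℝ) : (Fin n → ℝ) →L[ℝ] ℝ :=
  LinearMap.toContinuousLinearMap
    { toFun := fun v => w ⬝ᵥ v
      map_add' := fun u v => dotProduct_add w u v
      map_smul' := by
        intro c v
        simp [dotProduct, Finset.mul_sum, mul_left_comm] }

namespace Matrix

open scoped ComplexOrder

variable {n : Type*} [Fintype n] [DecidableEq n]

theorem commute_nonsing_inv_left {R : Type*} [CommRing R] {M Q : Matrix n n R}
    (h : Commute M Q) : Commute M⁻¹ Q := by
  by_cases hM : IsUnit M.det
  · calc M⁻¹ * Q = M⁻¹ * (Q * M) * M⁻¹ := by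
          rw [← Matrix.mul_assoc, Matrix.mul_assoc _ M, mul_nonsing_inv _ hM, Matrix.mul_one]
      _ = Q * M⁻¹ := by
          rw [← h.eq, ← Matrix.mul_assoc, nonsing_inv_mul _ hM, Matrix.one_mul]
  · simp [nonsing_inv_apply_not_isUnit _ hM]

theorem nonsing_inv_mul_mul_cancel_of_commute {R : Type*} [CommRing R] {M Q : Matrix n n R}
    (h : Commute M Q) (hM : IsUnit M.det) : M⁻¹ * Q * M = Q := by
  rw [Matrix.mul_assoc, ← h.eq, nonsing_inv_mul_cancel_left _ _ hM]

theorem IsHermitian.nonsing_inv_mul_of_commute {α : Type*} [CommRing α] [StarRing α]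
    {M Q : Matrix n n α} (hM : M.IsHermitian) (hQ : Q.IsHermitian) (h : Commute M Q) :
    (M⁻¹ * Q).IsHermitian :=
  (hM.inv.commute_iff hQ).mp (commute_nonsing_inv_left h)

theorem PosDef.of_isHermitian_of_mul_eq {𝕜 : Type*} [RCLike 𝕜] {A M Q : Matrix n n 𝕜}
    (hA : A.IsHermitian) (hM : M.PosSemidef) (hQ : Q.PosDef) (h : M * A = Q) : A.PosDef := by
  refine hA.posDef_iff_eigenvalues_pos.mpr fun i => ?_
  set v : n → 𝕜 := ⇑(hA.eigenvectorBasis i)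
  have hv : v ≠ 0 := fun hv =>
    hA.eigenvectorBasis.orthonormal.ne_zero i ((WithLp.ofLp_eq_zero 2).mp hv)
  have hQv : star v ⬝ᵥ Q *ᵥ v = (hA.eigenvalues i : 𝕜) * (star v ⬝ᵥ M *ᵥ v) := by
    rw [← h, ← mulVec_mulVec, hA.mulVec_eigenvectorBasis, mulVec_smul, dotProduct_smul,
      RCLike.real_smul_eq_coe_mul]
  have hpos := hQ.re_dotProduct_pos hv
  rw [hQv, RCLike.re_ofReal_mul] at hpos
  exact pos_of_mul_pos_left hpos (hM.re_dotProduct_nonneg v)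

theorem PosDef.nonsing_inv_mul_of_commute {𝕜 : Type*} [RCLike 𝕜] {M Q : Matrix n n 𝕜}
    (hM : M.PosDef) (hQ : Q.PosDef) (h : Commute M Q) : (M⁻¹ * Q).PosDef :=
  .of_isHermitian_of_mul_eq (hM.isHermitian.nonsing_inv_mul_of_commute hQ.isHermitian h)
    hM.posSemidef hQ (mul_nonsing_inv_cancel_left _ _ ((isUnit_iff_isUnit_det M).mp hM.isUnit))

end Matrix

noncomputable def dotProductCLM₂ (n : ℕ) :
    (Fin n → ℝ) →L[ℝ] (Fin n → ℝ) →L[ℝ] ℝ :=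
  LinearMap.toContinuousLinearMap
    { toFun := dotCLM
      map_add' := fun u v => ContinuousLinearMap.ext (add_dotProduct u v)
      map_smul' := fun c u => ContinuousLinearMap.ext (smul_dotProduct c u) }

theorem hasFDerivAt_half_dotProduct_mulVec {n : ℕ} {A : Matrix (Fin n) (Fin n) ℝ}
    (hA : A.IsSymm) (x : Fin n → ℝ) :
    HasFDerivAt (fun y : Fin n → ℝ => (1/2) * (y ⬝ᵥ A *ᵥ y)) (dotCLM (A *ᵥ x)) x := by
  have hquad := ((dotProductCLM₂ n).hasFDerivAt_of_bilinear (hasFDerivAt_id x)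
    (A.mulVecLin.toContinuousLinearMap.hasFDerivAt (x := x))).const_mul (1/2 : ℝ)
  refine hquad.congr_fderiv (ContinuousLinearMap.ext fun v => ?_)
  change 1 / 2 * (x ⬝ᵥ A *ᵥ v + v ⬝ᵥ A *ᵥ x) = A *ᵥ x ⬝ᵥ v
  rw [dotProduct_mulVec x, ← mulVec_transpose, hA.eq, dotProduct_comm v]
  ring

theorem HasDerivAt.matrix_mulVec {𝕜 : Type*} [NontriviallyNormedField 𝕜] [CompleteSpace 𝕜]
    {m n : Type*} [Fintype m] [Fintype n] (A : Matrix m n 𝕜) {X : 𝕜 → n → 𝕜}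
    {X' : n → 𝕜} {t : 𝕜} (hX : HasDerivAt X X' t) : HasDerivAt (fun s => A *ᵥ X s) (A *ᵥ X') t :=
  A.mulVecLin.toContinuousLinearMap.hasFDerivAt.comp_hasDerivAt t hX

theorem discrete_pH_state_transformation_general
    {n m : ℕ} (M Q J R : Matrix (Fin n) (Fin n) ℝ) (G : Matrix (Fin n) (Fin m) ℝ)
    (hM : M.PosDef) (hQ : Q.PosDef) (hMQ : M * Q = Q * M)
    (U : ℝ → Fin m → ℝ) (X : ℝ → Fin n → ℝ) (hX : Differentiable ℝ X)
    (hode : ∀ t, M.mulVec (deriv X t)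
      = (J - R).mulVec (Q.mulVec (X t)) + G.mulVec (U t)) :
    ((M⁻¹ * Q).PosDef
      ∧ ∀ Xt : Fin n → ℝ,
          HasFDerivAt (fun Y : Fin n → ℝ => (1/2) * (Y ⬝ᵥ (M⁻¹ * Q).mulVec Y))
            (dotCLM ((M⁻¹ * Q).mulVec Xt)) Xt)
    ∧ (∀ t,
        HasDerivAt (fun s => M.mulVec (X s))
          ((J - R).mulVec ((M⁻¹ * Q).mulVec (M.mulVec (X t))) + G.mulVec (U t)) t
        ∧ Gᵀ.mulVec ((M⁻¹ * Q).mulVec (M.mulVec (X t)))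
            = Gᵀ.mulVec (Q.mulVec (X t))
        ∧ (1/2) * (M.mulVec (X t) ⬝ᵥ (M⁻¹ * Q).mulVec (M.mulVec (X t)))
            = (1/2) * (X t ⬝ᵥ (Q * M).mulVec (X t))) := by
  have hPD : (M⁻¹ * Q).PosDef := hM.nonsing_inv_mul_of_commute hQ hMQ
  have hgrad (x : Fin n → ℝ) : (M⁻¹ * Q) *ᵥ (M *ᵥ x) = Q *ᵥ x := by
    rw [mulVec_mulVec, nonsing_inv_mul_mul_cancel_of_commute hMQ
      ((isUnit_iff_isUnit_det M).mp hM.isUnit)]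
  refine ⟨⟨hPD, hasFDerivAt_half_dotProduct_mulVec
    (isHermitian_iff_isSymm.mp hPD.isHermitian)⟩,
    fun t => ⟨?_, by rw [hgrad], ?_⟩⟩
  · rw [hgrad, ← hode t]
    exact (hX t).hasDerivAt.matrix_mulVec M
  · rw [hgrad, ← mulVec_mulVec, dotProduct_mulVec (X t) Q, ← mulVec_transpose,
      (isHermitian_iff_isSymm.mp hQ.isHermitian).eq, dotProduct_comm]

/-- **State transformation to the classical explicit port-Hamiltonian form.**
For `M, Q` symmetric positive definite and commuting, `J` skew-symmetric, `R`
symmetric positive semidefinite: (i) `M⁻¹Q` is symmetric positive definite and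
`H̃(X̃) = ½ X̃ᵀ M⁻¹ Q X̃` has gradient `∇H̃(X̃) = M⁻¹ Q X̃`; (ii) if
`M X' = (J - R) Q X + G U`, then the transformed state `X̃ = M X` satisfies
`X̃' = (J - R) ∇H̃(X̃) + G U`, the output satisfies
`Gᵀ ∇H̃(X̃) = Gᵀ Q X`, and `H̃(X̃) = ½ Xᵀ Q M X` is the original Hamiltonian. -/
theorem discrete_pH_state_transformation
    {n m : ℕ} (M Q J R : Matrix (Fin n) (Fin n) ℝ) (G : Matrix (Fin n) (Fin m) ℝ)
    (hM : M.PosDef) (hQ : Q.PosDef) (hMQ : M * Q = Q * M)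
    (hJ : Jᵀ = -J) (hR : R.PosSemidef)
    (U : ℝ → Fin m → ℝ) (X : ℝ → Fin n → ℝ) (hX : Differentiable ℝ X)
    (hode : ∀ t, M.mulVec (deriv X t)
      = (J - R).mulVec (Q.mulVec (X t)) + G.mulVec (U t)) :
    ((M⁻¹ * Q).PosDef
      ∧ ∀ Xt : Fin n → ℝ,
          HasFDerivAt (fun Y : Fin n → ℝ => (1/2) * (Y ⬝ᵥ (M⁻¹ * Q).mulVec Y))
            (dotCLM ((M⁻¹ * Q).mulVec Xt)) Xt)
    ∧ (∀ t,
        HasDerivAt (fun s => M.mulVec (X s))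
          ((J - R).mulVec ((M⁻¹ * Q).mulVec (M.mulVec (X t))) + G.mulVec (U t)) t
        ∧ Gᵀ.mulVec ((M⁻¹ * Q).mulVec (M.mulVec (X t)))
            = Gᵀ.mulVec (Q.mulVec (X t))
        ∧ (1/2) * (M.mulVec (X t) ⬝ᵥ (M⁻¹ * Q).mulVec (M.mulVec (X t)))
            = (1/2) * (X t ⬝ᵥ (Q * M).mulVec (X t))) :=
  discrete_pH_state_transformation_general M Q J R G hM hQ hMQ U X hX hode
end
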